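/- Bound on accumulated local gradients: if η_L ≤ 1/(8·L·K), then for every round t, writing θ_i = Σ_{k=0}^{K−1} ∇F_i(x_{t,k}^i), the iterates of generalized FedAvg satisfy Σ_{i=1}^m E_t[‖θ_i‖²] ≤ 15·m·K³·L²·η_L²·(σ_L² + 6·K·σ_G²) + (90·m·K⁴·L²·η_L² + 3·m·K²)·‖∇f(x_t)‖² + 3·m·K²·σ_G². -/

import Mathlib

open MeasureTheory ProbabilityTheory Finset
open scoped NNReal RealInnerProductSpace

/-!
The bound is proved worker by worker and then summed. For one worker write `D k = E‖y k - x₀‖²`.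
The noise `g k - ∇F (y k)` has conditional mean zero given the past, so it is orthogonal to
everything known before step `k`, and
`D (k + 1) = E‖y k - x₀ - η ∇F (y k)‖² + η² E‖g k - ∇F (y k)‖²`.
Young's inequality with weight `2K`, together with
`‖∇F y‖² ≤ 3L²‖y - x₀‖² + 3‖∇F x₀ - ∇f x₀‖² + 3‖∇f x₀‖²`, gives `D (k + 1) ≤ (1 + a) D k + C`
where `K a ≤ 1` as soon as `η ≤ 1 / (8LK)`. Hence `(1 + a) ^ k ≤ e < 3` during a round and
`D k ≤ 3 K C`. Finally `‖∑ₖ ∇F (y k)‖² ≤ K ∑ₖ ‖∇F (y k)‖²`, and each term is bounded as above.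
-/

section Inequalities

variable {ι E F : Type*} [SeminormedAddCommGroup E] [SeminormedAddCommGroup F]

theorem norm_sub_sq_le_of_pos (u v : E) {c : ℝ} (hc : 0 < c) :
    ‖u - v‖ ^ 2 ≤ (1 + 1 / c) * ‖u‖ ^ 2 + (1 + c) * ‖v‖ ^ 2 := by
  have hyoung : 2 * ‖u‖ * ‖v‖ ≤ ‖u‖ ^ 2 / c + c * ‖v‖ ^ 2 := by
    rw [div_add' _ _ _ hc.ne', le_div_iff₀ hc]
    nlinarith [sq_nonneg (‖u‖ - c * ‖v‖)]
  calc ‖u - v‖ ^ 2 ≤ (‖u‖ + ‖v‖) ^ 2 := by gcongr; exact norm_sub_le u v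
    _ ≤ ‖u‖ ^ 2 + (‖u‖ ^ 2 / c + c * ‖v‖ ^ 2) + ‖v‖ ^ 2 := by linarith
    _ = (1 + 1 / c) * ‖u‖ ^ 2 + (1 + c) * ‖v‖ ^ 2 := by ring

theorem norm_sum_sq_le_card_mul (s : Finset ι) (v : ι → E) :
    ‖∑ i ∈ s, v i‖ ^ 2 ≤ #s * ∑ i ∈ s, ‖v i‖ ^ 2 :=
  calc ‖∑ i ∈ s, v i‖ ^ 2 ≤ (∑ i ∈ s, ‖v i‖) ^ 2 := by gcongr; exact norm_sum_le s v
    _ ≤ #s * ∑ i ∈ s, ‖v i‖ ^ 2 := sq_sum_le_card_mul_sum_sq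

theorem LipschitzWith.norm_sq_le {G : E → F} {L : ℝ≥0} (hG : LipschitzWith L G)
    (x y : E) (v : F) :
    ‖G y‖ ^ 2 ≤ 3 * L ^ 2 * ‖y - x‖ ^ 2 + 3 * ‖G x - v‖ ^ 2 + 3 * ‖v‖ ^ 2 := by
  have hlip : ‖G y - G x‖ ^ 2 ≤ L ^ 2 * ‖y - x‖ ^ 2 := by
    rw [← mul_pow]; gcongr; exact hG.norm_sub_le y x
  have h3 := norm_sum_sq_le_card_mul univ ![G y - G x, G x - v, v]
  simp only [Fin.sum_univ_three, Matrix.cons_val_zero, Matrix.cons_val_one, Matrix.cons_val,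
    sub_add_sub_cancel, sub_add_cancel, card_univ, Fintype.card_fin, Nat.succ_eq_add_one,
    Nat.reduceAdd, Nat.cast_ofNat] at h3
  linarith

end Inequalities

theorem le_mul_geom_sum_of_le_mul_add {D : ℕ → ℝ} {r c : ℝ} {n : ℕ} (hr : 0 ≤ r)
    (h0 : D 0 = 0) (hstep : ∀ k < n, D (k + 1) ≤ r * D k + c) :
    ∀ k ≤ n, D k ≤ c * ∑ j ∈ range k, r ^ j := by
  intro k hk
  induction k with
  | zero => simp [h0]
  | succ k ih =>
    calc D (k + 1) ≤ r * D k + c := hstep k hk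
      _ ≤ r * (c * ∑ j ∈ range k, r ^ j) + c := by gcongr; exact ih (by omega)
      _ = c * ∑ j ∈ range (k + 1), r ^ j := by rw [geom_sum_succ]; ring

theorem one_add_pow_le_three {a : ℝ} {j : ℕ} (ha : 0 ≤ a) (hja : j * a ≤ 1) :
    (1 + a) ^ j ≤ 3 :=
  calc (1 + a) ^ j ≤ Real.exp a ^ j := by gcongr; linarith [Real.add_one_le_exp a]
    _ = Real.exp (j * a) := (Real.exp_nat_mul a j).symm
    _ ≤ Real.exp 1 := Real.exp_le_exp.mpr hja
    _ ≤ 3 := Real.exp_one_lt_three.le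

theorem geom_sum_one_add_le {a : ℝ} {n : ℕ} (ha : 0 ≤ a) (hna : n * a ≤ 1) :
    ∑ j ∈ range n, (1 + a) ^ j ≤ 3 * n :=
  calc ∑ j ∈ range n, (1 + a) ^ j ≤ ∑ _j ∈ range n, (3 : ℝ) := by
        refine sum_le_sum fun j hj => one_add_pow_le_three ha ?_
        have : (j : ℝ) ≤ n := by exact_mod_cast (mem_range.mp hj).le
        nlinarith
    _ = 3 * n := by simp [mul_comm]

theorem LipschitzWith.memLp_comp {Ω E F : Type*} {mΩ : MeasurableSpace Ω} {μ : Measure Ω}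
    [IsFiniteMeasure μ] [NormedAddCommGroup E] [NormedAddCommGroup F] {p : ENNReal}
    {G : E → F} {L : ℝ≥0} (hG : LipschitzWith L G) {f : Ω → E} (hf : MemLp f p μ) :
    MemLp (fun ω => G (f ω)) p μ := by
  have := ((hG.sub (LipschitzWith.const (G 0))).comp_memLp (by simp) hf).add (memLp_const (G 0))
  convert this using 1
  ext ω
  simp

section Orthogonality

variable {Ω E : Type*} {m mΩ : MeasurableSpace Ω} {μ : Measure Ω}
  [NormedAddCommGroup E] [InnerProductSpace ℝ E] [CompleteSpace E]

theorem integral_inner_eq_zero_of_condExp_eq_zero (hm : m ≤ mΩ) [SigmaFinite (μ.trim hm)]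
    {a ξ : Ω → E} (ha : StronglyMeasurable[m] a) (haξ : Integrable (fun ω => ⟪a ω, ξ ω⟫) μ)
    (hξ : Integrable ξ μ) (hξ0 : μ[ξ | m] =ᵐ[μ] 0) :
    ∫ ω, ⟪a ω, ξ ω⟫ ∂μ = 0 := by
  have hpull : μ[fun ω => ⟪a ω, ξ ω⟫ | m] =ᵐ[μ] fun _ => 0 := by
    refine (condExp_bilin_of_stronglyMeasurable_left (innerSL ℝ) ha haξ hξ).trans ?_
    filter_upwards [hξ0] with ω hω
    simp [hω]
  rw [← integral_condExp hm, integral_congr_ae hpull, integral_zero]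

theorem integral_norm_sub_smul_sq_of_condExp_eq_zero [IsFiniteMeasure μ] (hm : m ≤ mΩ)
    {a ξ : Ω → E} (ha : StronglyMeasurable[m] a) (ha2 : MemLp a 2 μ) (hξ2 : MemLp ξ 2 μ)
    (hξ0 : μ[ξ | m] =ᵐ[μ] 0) (t : ℝ) :
    ∫ ω, ‖a ω - t • ξ ω‖ ^ 2 ∂μ = ∫ ω, ‖a ω‖ ^ 2 ∂μ + t ^ 2 * ∫ ω, ‖ξ ω‖ ^ 2 ∂μ := by
  have haξ : Integrable (fun ω => ⟪a ω, ξ ω⟫) μ :=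
    memLp_one_iff_integrable.1 ((innerSL ℝ).memLp_of_bilin 1 ha2 hξ2)
  have hcross :=
    integral_inner_eq_zero_of_condExp_eq_zero hm ha haξ (hξ2.integrable one_le_two) hξ0
  have hexpand : ∀ ω,
      ‖a ω - t • ξ ω‖ ^ 2 = ‖a ω‖ ^ 2 - 2 * t * ⟪a ω, ξ ω⟫ + t ^ 2 * ‖ξ ω‖ ^ 2 := by
    intro ω
    rw [norm_sub_sq_real, inner_smul_right, norm_smul, Real.norm_eq_abs, mul_pow, sq_abs]
    ring
  have ha2' : Integrable (fun ω => ‖a ω‖ ^ 2) μ := ha2.integrable_norm_pow two_ne_zero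
  have hξ2' : Integrable (fun ω => ‖ξ ω‖ ^ 2) μ := hξ2.integrable_norm_pow two_ne_zero
  simp_rw [hexpand]
  rw [integral_add (by fun_prop) (by fun_prop), integral_sub ha2' (by fun_prop),
    integral_const_mul, integral_const_mul, hcross]
  ring

end Orthogonality

section LocalSGD

variable {Ω E : Type*} {mΩ : MeasurableSpace Ω} {μ : Measure Ω}
  [NormedAddCommGroup E] [NormedSpace ℝ E] [MeasurableSpace E]
  {𝒢 : ℕ → MeasurableSpace Ω} {G : E → E} {η σ : ℝ} {K : ℕ} {x₀ : E} {g y : ℕ → Ω → E}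
  {L : ℝ≥0}

/-- In the paper's notation `y k` is `x_{t,k}^i`, `g k` is `g_{t,k}^i` and `G` is `∇F_i`;
`𝒢 k` is the information available when `g k` is drawn. -/
structure IsLocalSGD (μ : Measure Ω) (𝒢 : ℕ → MeasurableSpace Ω) (G : E → E) (η σ : ℝ)
    (K : ℕ) (x₀ : E) (g y : ℕ → Ω → E) : Prop where
  le : ∀ k, 𝒢 k ≤ mΩ
  start : ∀ ω, y 0 ω = x₀
  step : ∀ k < K, ∀ ω, y (k + 1) ω = y k ω - η • g k ω
  measurable_iterate : ∀ k, Measurable[𝒢 k] (y k)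
  measurable_grad : ∀ k, Measurable[𝒢 (k + 1)] (g k)
  integrable_norm_grad_sq : ∀ k, Integrable (fun ω => ‖g k ω‖ ^ 2) μ
  condExp_grad : ∀ k, μ[g k | 𝒢 k] =ᵐ[μ] fun ω => G (y k ω)
  condExp_norm_noise_sq_le :
    ∀ k, μ[fun ω => ‖g k ω - G (y k ω)‖ ^ 2 | 𝒢 k] ≤ᵐ[μ] fun _ => σ ^ 2

namespace IsLocalSGD

theorem integral_norm_noise_sq_le [IsProbabilityMeasure μ]
    (h : IsLocalSGD μ 𝒢 G η σ K x₀ g y) (k : ℕ) : ∫ ω, ‖g k ω - G (y k ω)‖ ^ 2 ∂μ ≤ σ ^ 2 := by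
  rw [← integral_condExp (h.le k)]
  simpa using integral_mono_ae integrable_condExp (integrable_const (σ ^ 2))
    (h.condExp_norm_noise_sq_le k)

variable [BorelSpace E] [SecondCountableTopology E]

theorem memLp_grad (h : IsLocalSGD μ 𝒢 G η σ K x₀ g y) (k : ℕ) : MemLp (g k) 2 μ :=
  (memLp_two_iff_integrable_sq_norm
    ((h.measurable_grad k).mono (h.le _) le_rfl).aestronglyMeasurable).2
    (h.integrable_norm_grad_sq k)

theorem memLp_iterate [IsFiniteMeasure μ] (h : IsLocalSGD μ 𝒢 G η σ K x₀ g y) {k : ℕ}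
    (hk : k ≤ K) : MemLp (y k) 2 μ := by
  induction k with
  | zero => simpa [funext h.start] using memLp_const x₀
  | succ k ih =>
    rw [funext (h.step k hk)]
    exact (ih (by omega)).sub ((h.memLp_grad k).const_smul η)

theorem memLp_comp_iterate [IsFiniteMeasure μ] (h : IsLocalSGD μ 𝒢 G η σ K x₀ g y)
    (hG : LipschitzWith L G) {k : ℕ} (hk : k ≤ K) : MemLp (fun ω => G (y k ω)) 2 μ :=
  hG.memLp_comp (h.memLp_iterate hk)

theorem stronglyMeasurable_comp_iterate (h : IsLocalSGD μ 𝒢 G η σ K x₀ g y)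
    (hG : Continuous G) (k : ℕ) : StronglyMeasurable[𝒢 k] (fun ω => G (y k ω)) :=
  (hG.measurable.comp (h.measurable_iterate k)).stronglyMeasurable

theorem condExp_noise_eq_zero [CompleteSpace E] [IsFiniteMeasure μ]
    (h : IsLocalSGD μ 𝒢 G η σ K x₀ g y) (hG : Continuous G) (k : ℕ) :
    μ[fun ω => g k ω - G (y k ω) | 𝒢 k] =ᵐ[μ] 0 := by
  have hint : Integrable (fun ω => G (y k ω)) μ := integrable_condExp.congr (h.condExp_grad k)
  have hself : μ[fun ω => G (y k ω) | 𝒢 k] = fun ω => G (y k ω) :=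
    condExp_of_stronglyMeasurable (h.le k) (h.stronglyMeasurable_comp_iterate hG k) hint
  filter_upwards [condExp_sub ((h.memLp_grad k).integrable one_le_two) hint (𝒢 k),
    h.condExp_grad k] with ω hsub hgrad
  change μ[g k - fun ω => G (y k ω) | 𝒢 k] ω = 0
  simp only [hsub, Pi.sub_apply, hgrad, hself, sub_self]

theorem integral_norm_sum_comp_iterate_sq_le_sum [IsProbabilityMeasure μ]
    (h : IsLocalSGD μ 𝒢 G η σ K x₀ g y) (hG : LipschitzWith L G) (v : E) :
    ∫ ω, ‖∑ k ∈ range K, G (y k ω)‖ ^ 2 ∂μ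
      ≤ K * ∑ k ∈ range K,
        (3 * L ^ 2 * ∫ ω, ‖y k ω - x₀‖ ^ 2 ∂μ + 3 * (‖G x₀ - v‖ ^ 2 + ‖v‖ ^ 2)) := by
  set s := ‖G x₀ - v‖ ^ 2 + ‖v‖ ^ 2
  have hdist : ∀ k ∈ range K, Integrable (fun ω => ‖y k ω - x₀‖ ^ 2) μ := fun k hk =>
    ((h.memLp_iterate (mem_range.1 hk).le).sub (memLp_const x₀)).integrable_norm_pow two_ne_zero
  have hint : ∀ k ∈ range K, Integrable (fun ω => 3 * L ^ 2 * ‖y k ω - x₀‖ ^ 2 + 3 * s) μ :=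
    fun k hk => ((hdist k hk).const_mul _).add (integrable_const _)
  have hpt : ∀ ω, ‖∑ k ∈ range K, G (y k ω)‖ ^ 2
      ≤ (K : ℝ) * ∑ k ∈ range K, (3 * L ^ 2 * ‖y k ω - x₀‖ ^ 2 + 3 * s) := fun ω => by
    refine (norm_sum_sq_le_card_mul _ _).trans ?_
    rw [card_range]
    gcongr with k
    linarith [hG.norm_sq_le x₀ (y k ω) v]
  refine (integral_mono_of_nonneg (.of_forall fun ω => by positivity)
    ((integrable_finsetSum _ hint).const_mul _) (.of_forall hpt)).trans_eq ?_
  rw [integral_const_mul, integral_finsetSum _ hint]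
  congr 1
  refine sum_congr rfl fun k hk => ?_
  rw [integral_add ((hdist k hk).const_mul _) (integrable_const _), integral_const_mul]
  simp

end IsLocalSGD

end LocalSGD

section LocalSGDBounds

variable {Ω E : Type*} {mΩ : MeasurableSpace Ω} {μ : Measure Ω}
  [NormedAddCommGroup E] [InnerProductSpace ℝ E] [CompleteSpace E]
  [MeasurableSpace E] [BorelSpace E] [SecondCountableTopology E]
  {𝒢 : ℕ → MeasurableSpace Ω} {G : E → E} {η σ : ℝ} {K : ℕ} {x₀ : E} {g y : ℕ → Ω → E}
  {L : ℝ≥0}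

namespace IsLocalSGD

theorem integral_norm_sub_start_sq_succ [IsFiniteMeasure μ] (h : IsLocalSGD μ 𝒢 G η σ K x₀ g y)
    (hG : LipschitzWith L G) {k : ℕ} (hk : k < K) :
    ∫ ω, ‖y (k + 1) ω - x₀‖ ^ 2 ∂μ = ∫ ω, ‖y k ω - x₀ - η • G (y k ω)‖ ^ 2 ∂μ
      + η ^ 2 * ∫ ω, ‖g k ω - G (y k ω)‖ ^ 2 ∂μ := by
  have hsplit : ∀ ω, y (k + 1) ω - x₀
      = (y k ω - x₀ - η • G (y k ω)) - η • (g k ω - G (y k ω)) := fun ω => by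
    rw [h.step k hk, smul_sub]; abel
  simp_rw [hsplit]
  refine integral_norm_sub_smul_sq_of_condExp_eq_zero (h.le k) ?_ ?_ ?_
    (h.condExp_noise_eq_zero hG.continuous k) η
  · exact (((h.measurable_iterate k).sub measurable_const).sub
      ((hG.continuous.measurable.comp (h.measurable_iterate k)).const_smul η)).stronglyMeasurable
  · exact ((h.memLp_iterate hk.le).sub (memLp_const x₀)).sub
      ((h.memLp_comp_iterate hG hk.le).const_smul η)
  · exact (h.memLp_grad k).sub (h.memLp_comp_iterate hG hk.le)

theorem integral_norm_sub_start_sq_succ_le [IsProbabilityMeasure μ]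
    (h : IsLocalSGD μ 𝒢 G η σ K x₀ g y)
    (hG : LipschitzWith L G) {k : ℕ} (hk : k < K) {c : ℝ} (hc : 0 < c) (v : E) :
    ∫ ω, ‖y (k + 1) ω - x₀‖ ^ 2 ∂μ
      ≤ (1 + 1 / c + 3 * (1 + c) * η ^ 2 * L ^ 2) * ∫ ω, ‖y k ω - x₀‖ ^ 2 ∂μ
        + (η ^ 2 * σ ^ 2 + 3 * (1 + c) * η ^ 2 * (‖G x₀ - v‖ ^ 2 + ‖v‖ ^ 2)) := by
  have hdrift : ∀ ω, ‖y k ω - x₀ - η • G (y k ω)‖ ^ 2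
      ≤ (1 + 1 / c + 3 * (1 + c) * η ^ 2 * L ^ 2) * ‖y k ω - x₀‖ ^ 2
        + 3 * (1 + c) * η ^ 2 * (‖G x₀ - v‖ ^ 2 + ‖v‖ ^ 2) := fun ω => by
    have hyoung := norm_sub_sq_le_of_pos (y k ω - x₀) (η • G (y k ω)) hc
    rw [norm_smul, mul_pow, Real.norm_eq_abs, sq_abs] at hyoung
    have hGy : (1 + c) * (η ^ 2 * ‖G (y k ω)‖ ^ 2) ≤ (1 + c) * (η ^ 2 *
        (3 * L ^ 2 * ‖y k ω - x₀‖ ^ 2 + 3 * ‖G x₀ - v‖ ^ 2 + 3 * ‖v‖ ^ 2)) := by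
      gcongr; exact hG.norm_sq_le x₀ (y k ω) v
    linarith
  have hdist : Integrable (fun ω => ‖y k ω - x₀‖ ^ 2) μ :=
    ((h.memLp_iterate hk.le).sub (memLp_const x₀)).integrable_norm_pow two_ne_zero
  have hdrift_int : ∫ ω, ‖y k ω - x₀ - η • G (y k ω)‖ ^ 2 ∂μ
      ≤ (1 + 1 / c + 3 * (1 + c) * η ^ 2 * L ^ 2) * ∫ ω, ‖y k ω - x₀‖ ^ 2 ∂μ
        + 3 * (1 + c) * η ^ 2 * (‖G x₀ - v‖ ^ 2 + ‖v‖ ^ 2) := by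
    refine (integral_mono_of_nonneg (.of_forall fun ω => by positivity)
      ((hdist.const_mul _).add (integrable_const _)) (.of_forall hdrift)).trans_eq ?_
    simp only [Pi.add_apply]
    rw [integral_add (hdist.const_mul _) (integrable_const _), integral_const_mul]
    simp
  have hnoise := mul_le_mul_of_nonneg_left (h.integral_norm_noise_sq_le k) (sq_nonneg η)
  rw [h.integral_norm_sub_start_sq_succ hG hk]
  linarith

theorem integral_norm_sub_start_sq_le [IsProbabilityMeasure μ]
    (h : IsLocalSGD μ 𝒢 G η σ K x₀ g y) (hG : LipschitzWith L G) (hK : 0 < K) (hη : 0 ≤ η)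
    (hηL : 8 * L * K * η ≤ 1) (v : E) {k : ℕ} (hk : k ≤ K) :
    ∫ ω, ‖y k ω - x₀‖ ^ 2 ∂μ
      ≤ 3 * K * (η ^ 2 * σ ^ 2 + 3 * (1 + 2 * K) * η ^ 2 * (‖G x₀ - v‖ ^ 2 + ‖v‖ ^ 2)) := by
  have hK1 : (1 : ℝ) ≤ K := by exact_mod_cast hK
  set a : ℝ := 1 / (2 * K) + 3 * (1 + 2 * K) * η ^ 2 * L ^ 2 with ha_def
  set C : ℝ := η ^ 2 * σ ^ 2 + 3 * (1 + 2 * K) * η ^ 2 * (‖G x₀ - v‖ ^ 2 + ‖v‖ ^ 2)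
  have ha : 0 ≤ a := by positivity
  have hC : 0 ≤ C := by positivity
  have hKa : K * a ≤ 1 := by
    have hsq : (8 * L * K * η) ^ 2 ≤ 1 := pow_le_one₀ (by positivity) hηL
    have hhalf : (K : ℝ) * (1 / (2 * K)) = 1 / 2 := by field_simp
    rw [ha_def, mul_add, hhalf]
    nlinarith [mul_nonneg (by positivity : (0 : ℝ) ≤ K * η ^ 2 * L ^ 2) (sub_nonneg.2 hK1)]
  have hrec := le_mul_geom_sum_of_le_mul_add (D := fun k => ∫ ω, ‖y k ω - x₀‖ ^ 2 ∂μ)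
    (r := 1 + a) (c := C) (n := K) (by positivity) (by simp [h.start]) fun k hk =>
      (h.integral_norm_sub_start_sq_succ_le hG hk (c := 2 * K) (by positivity) v).trans_eq
        (by ring)
  calc ∫ ω, ‖y k ω - x₀‖ ^ 2 ∂μ ≤ C * ∑ j ∈ range k, (1 + a) ^ j := hrec k hk
    _ ≤ C * (3 * k) := by
      gcongr
      refine geom_sum_one_add_le ha (le_trans ?_ hKa)
      gcongr
    _ ≤ 3 * K * C := by
      have : (k : ℝ) ≤ K := by exact_mod_cast hk
      nlinarith

theorem integral_norm_sum_comp_iterate_sq_le [IsProbabilityMeasure μ]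
    (h : IsLocalSGD μ 𝒢 G η σ K x₀ g y) (hG : LipschitzWith L G) (hK : 0 < K) (hη : 0 ≤ η)
    (hηL : 8 * L * K * η ≤ 1) (v : E) {σG : ℝ} (hv : ‖G x₀ - v‖ ^ 2 ≤ σG ^ 2) :
    ∫ ω, ‖∑ k ∈ range K, G (y k ω)‖ ^ 2 ∂μ
      ≤ 15 * K ^ 3 * L ^ 2 * η ^ 2 * (σ ^ 2 + 6 * K * σG ^ 2)
        + (90 * K ^ 4 * L ^ 2 * η ^ 2 + 3 * K ^ 2) * ‖v‖ ^ 2 + 3 * K ^ 2 * σG ^ 2 := by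
  set s := ‖G x₀ - v‖ ^ 2 + ‖v‖ ^ 2
  have hs : s ≤ σG ^ 2 + ‖v‖ ^ 2 := by linarith
  have h3K : 1 + 2 * (K : ℝ) ≤ 3 * K := by linarith [(Nat.one_le_cast (α := ℝ)).2 hK]
  calc ∫ ω, ‖∑ k ∈ range K, G (y k ω)‖ ^ 2 ∂μ
      ≤ K * ∑ k ∈ range K, (3 * L ^ 2 * ∫ ω, ‖y k ω - x₀‖ ^ 2 ∂μ + 3 * s) :=
        h.integral_norm_sum_comp_iterate_sq_le_sum hG v
    _ ≤ K * ∑ _k ∈ range K,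
          (3 * L ^ 2 * (3 * K * (η ^ 2 * σ ^ 2 + 3 * (1 + 2 * K) * η ^ 2 * s)) + 3 * s) := by
        gcongr with k hk
        exact h.integral_norm_sub_start_sq_le hG hK hη hηL v (mem_range.1 hk).le
    _ ≤ K * (K * (3 * L ^ 2 * (3 * K * (η ^ 2 * σ ^ 2
          + 3 * (3 * K) * η ^ 2 * (σG ^ 2 + ‖v‖ ^ 2))) + 3 * (σG ^ 2 + ‖v‖ ^ 2))) := by
        rw [sum_const, card_range, nsmul_eq_mul]
        gcongr
    _ ≤ _ := by
        have : 0 ≤ 6 * K ^ 3 * L ^ 2 * η ^ 2 * σ ^ 2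
          + 9 * K ^ 4 * L ^ 2 * η ^ 2 * (σG ^ 2 + ‖v‖ ^ 2) := by positivity
        linarith

end IsLocalSGD

end LocalSGDBounds

theorem accumulated_local_gradients_bound_general
    {d m K : ℕ} (hK : 0 < K)
    (L σL σG ηL : ℝ) (hL : 0 < L) (hηL : 0 < ηL)
    (F : Fin m → EuclideanSpace ℝ (Fin d) → ℝ)
    (hFlip : ∀ i, LipschitzWith (Real.toNNReal L) (fun x => gradient (F i) x))
    (f : EuclideanSpace ℝ (Fin d) → ℝ)
    (hhet : ∀ i x, ‖gradient (F i) x - gradient f x‖ ^ 2 ≤ σG ^ 2)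
    {Ω : Type} [MeasureSpace Ω] [IsProbabilityMeasure (ℙ : Measure Ω)]
    (𝒢 : ℕ → MeasurableSpace Ω)
    (h𝒢 : ∀ k, 𝒢 k ≤ (inferInstance : MeasurableSpace Ω))
    (xt : EuclideanSpace ℝ (Fin d))
    (g y : Fin m → ℕ → Ω → EuclideanSpace ℝ (Fin d))
    (hy0 : ∀ i ω, y i 0 ω = xt)
    (hyrec : ∀ i k ω, k < K → y i (k + 1) ω = y i k ω - ηL • g i k ω)
    (hymeas : ∀ i k, Measurable[𝒢 k] (y i k))
    (hgmeas : ∀ i k, Measurable[𝒢 (k + 1)] (g i k))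
    (hgsq : ∀ i k, Integrable (fun ω => ‖g i k ω‖ ^ 2) ℙ)
    (hunbiased : ∀ i k, (ℙ : Measure Ω)[g i k | 𝒢 k]
        =ᵐ[ℙ] fun ω => gradient (F i) (y i k ω))
    (hvar : ∀ i k, (ℙ : Measure Ω)[(fun ω => ‖g i k ω - gradient (F i) (y i k ω)‖ ^ 2) | 𝒢 k]
        ≤ᵐ[ℙ] fun _ => σL ^ 2)
    (hηL8 : ηL ≤ 1 / (8 * L * K)) :
    ∑ i, ∫ ω, ‖∑ k ∈ range K, gradient (F i) (y i k ω)‖ ^ 2 ∂ℙ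
      ≤ 15 * m * K ^ 3 * L ^ 2 * ηL ^ 2 * (σL ^ 2 + 6 * K * σG ^ 2)
        + (90 * m * K ^ 4 * L ^ 2 * ηL ^ 2 + 3 * m * K ^ 2) * ‖gradient f xt‖ ^ 2
        + 3 * m * K ^ 2 * σG ^ 2 := by
  have hLK : 8 * (Real.toNNReal L : ℝ) * K * ηL ≤ 1 := by
    rw [Real.coe_toNNReal L hL.le]
    rw [le_div_iff₀ (by positivity)] at hηL8
    linarith
  have hworker : ∀ i, ∫ ω, ‖∑ k ∈ range K, gradient (F i) (y i k ω)‖ ^ 2 ∂ℙ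
      ≤ 15 * K ^ 3 * L ^ 2 * ηL ^ 2 * (σL ^ 2 + 6 * K * σG ^ 2)
        + (90 * K ^ 4 * L ^ 2 * ηL ^ 2 + 3 * K ^ 2) * ‖gradient f xt‖ ^ 2
        + 3 * K ^ 2 * σG ^ 2 := fun i => by
    have hrun : IsLocalSGD ℙ 𝒢 (gradient (F i)) ηL σL K xt (g i) (y i) :=
      ⟨h𝒢, hy0 i, fun k hk ω => hyrec i k ω hk, hymeas i, hgmeas i, hgsq i, hunbiased i, hvar i⟩
    simpa only [Real.coe_toNNReal L hL.le] using
      hrun.integral_norm_sum_comp_iterate_sq_le (hFlip i) hK hηL.le hLK _ (hhet i xt)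
  calc _ ≤ ∑ _i : Fin m, (15 * K ^ 3 * L ^ 2 * ηL ^ 2 * (σL ^ 2 + 6 * K * σG ^ 2)
        + (90 * K ^ 4 * L ^ 2 * ηL ^ 2 + 3 * K ^ 2) * ‖gradient f xt‖ ^ 2
        + 3 * K ^ 2 * σG ^ 2) := sum_le_sum fun i _ => hworker i
    _ = _ := by
      rw [sum_const, card_univ, Fintype.card_fin, nsmul_eq_mul]
      ring

/-- **Bound on accumulated local gradients.**
Setting: one round of generalized FedAvg, conditioned on the current server iterate
`x_t = xt` (a deterministic point, since `E_t` conditions on `x_t`).  Each worker `i`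
runs `K` local SGD steps `y i (k+1) = y i k − η_L • g i k` from `y i 0 = xt`, with
conditionally unbiased stochastic gradients of conditional variance `≤ σ_L²`, noises
mutually conditionally independent across workers (independence across steps is
encoded by the filtration `𝒢`).  `F i` has `L`-Lipschitz gradient,
`f = (1/m) ∑ i, F i`, and `‖∇F i x − ∇f x‖² ≤ σ_G²`.  If `η_L ≤ 1/(8LK)`, then,
writing `θ i = ∑_{k<K} ∇F i (y i k)`,
`∑ i, E_t‖θ i‖² ≤ 15mK³L²η_L²(σ_L² + 6Kσ_G²)
  + (90mK⁴L²η_L² + 3mK²)‖∇f(x_t)‖² + 3mK²σ_G²`. -/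
theorem accumulated_local_gradients_bound
    {d m K : ℕ} (hd : 0 < d) (hm : 0 < m) (hK : 0 < K)
    (L σL σG ηL : ℝ) (hL : 0 < L) (hσL : 0 ≤ σL) (hσG : 0 ≤ σG) (hηL : 0 < ηL)
    (F : Fin m → EuclideanSpace ℝ (Fin d) → ℝ)
    (hFdiff : ∀ i, Differentiable ℝ (F i))
    (hFlip : ∀ i, LipschitzWith (Real.toNNReal L) (fun x => gradient (F i) x))
    (f : EuclideanSpace ℝ (Fin d) → ℝ)
    (hf : f = fun x => (1 / (m : ℝ)) * ∑ i, F i x)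
    (hhet : ∀ i x, ‖gradient (F i) x - gradient f x‖ ^ 2 ≤ σG ^ 2)
    {Ω : Type} [MeasureSpace Ω] [IsProbabilityMeasure (ℙ : Measure Ω)]
    [StandardBorelSpace Ω]
    (𝒢 : ℕ → MeasurableSpace Ω)
    (h𝒢 : ∀ k, 𝒢 k ≤ (inferInstance : MeasurableSpace Ω)) (h𝒢mono : Monotone 𝒢)
    (xt : EuclideanSpace ℝ (Fin d))
    (g y : Fin m → ℕ → Ω → EuclideanSpace ℝ (Fin d))
    (hy0 : ∀ i ω, y i 0 ω = xt)
    (hyrec : ∀ i k ω, k < K → y i (k + 1) ω = y i k ω - ηL • g i k ω)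
    (hymeas : ∀ i k, Measurable[𝒢 k] (y i k))
    (hgmeas : ∀ i k, Measurable[𝒢 (k + 1)] (g i k))
    (hgint : ∀ i k, Integrable (g i k) ℙ)
    (hgsq : ∀ i k, Integrable (fun ω => ‖g i k ω‖ ^ 2) ℙ)
    (hunbiased : ∀ i k, (ℙ : Measure Ω)[g i k | 𝒢 k]
        =ᵐ[ℙ] fun ω => gradient (F i) (y i k ω))
    (hvar : ∀ i k, (ℙ : Measure Ω)[(fun ω => ‖g i k ω - gradient (F i) (y i k ω)‖ ^ 2) | 𝒢 k]
        ≤ᵐ[ℙ] fun _ => σL ^ 2)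
    (hindep : ∀ k, iCondIndepFun (𝒢 k) (h𝒢 k)
        (fun i ω => g i k ω - gradient (F i) (y i k ω)) ℙ)
    (hηL8 : ηL ≤ 1 / (8 * L * K)) :
    ∑ i, ∫ ω, ‖∑ k ∈ range K, gradient (F i) (y i k ω)‖ ^ 2 ∂ℙ
      ≤ 15 * m * K ^ 3 * L ^ 2 * ηL ^ 2 * (σL ^ 2 + 6 * K * σG ^ 2)
        + (90 * m * K ^ 4 * L ^ 2 * ηL ^ 2 + 3 * m * K ^ 2) * ‖gradient f xt‖ ^ 2
        + 3 * m * K ^ 2 * σG ^ 2 :=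
  accumulated_local_gradients_bound_general hK L σL σG ηL hL hηL F hFlip f hhet 𝒢 h𝒢 xt g y hy0
    hyrec hymeas hgmeas hgsq hunbiased hvar hηL8
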